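/- arXiv:2410.01757 — 6 statements merged into one kernel-verified Lean document; each statement's English description precedes it below -/
import Mathlib

section
/- Let G be a countable group containing a subgroup F_2 ≤ G that is a free group on two generators, and let G ↷ X be a free action by homeomorphisms on a compact metrizable space. Suppose that for every finite D ⊂ F_2 there exist open sets V_1, V_2, V_3 ⊂ X and elements g_1, g_2, g_3 ∈ G such that the sets g·cl(V_i), for g ∈ D and i ∈ {1,2,3}, are pairwise disjoint, and g_1V_1 ∪ g_2V_2 ∪ g_3V_3 = X. Then there exists a G-equivariant topological embedding of X into [0,1]^G equipped with the left shift action. -/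
/-!
Take seven elements of the free subgroup and a paradoxical cover for them: with `M` the union of
the `cl(V_i)`, the seven translates of `M` are pairwise disjoint while the three translates
`c_i M` cover `X`. One translate of `M` serves as a marker, three carry data and three carry the
next level of the code. Fix continuous `u_n : X → [0,1]` separating points. A `1/4`-contraction
on bounded continuous functions on `ℕ × X` has a fixed point `F` with `F_n = 1` exactly on the
marker and, on the other translates, `F_n = (1 + u_n)/4` resp. `(1 + F_{n+1})/4` pulled back
along the corresponding element; these values lie in `[1/4, 1/2]`, away from the marker value.
The prescriptions are glued by `max_p min(value_p, bump_p)`, with bumps equal to `1` exactly on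
one translate and `0` on the others, which exist by perfect normality.
If the orbits of `x` and `y` carry the same values of `F_n`, the marker sees `c_i⁻¹ x ∈ M` and
`c_i⁻¹ y ∈ M` at the same time, and the data and next-level translates then give `u_n x = u_n y`
and the same values of `F_{n+1}` along both orbits. So `F_0` separates orbits, and
`x ↦ (g ↦ F_0 (g⁻¹ x))` is the required embedding.
-/

open Set Pointwise Topology Function BoundedContinuousFunction

noncomputable section

section Patch

variable {κ : Type*} [Fintype κ] [Nonempty κ]

def patch (a b : κ → ℝ) : ℝ :=
  Finset.univ.sup' Finset.univ_nonempty fun p => min (a p) (b p)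

theorem le_patch (a b : κ → ℝ) (p : κ) : min (a p) (b p) ≤ patch a b :=
  Finset.le_sup' (fun q => min (a q) (b q)) (Finset.mem_univ p)

theorem patch_eq_of_eq_one {a b : κ → ℝ} {p : κ} (ha : a p ∈ Icc 0 1) (hbp : b p = 1)
    (hb : ∀ q ≠ p, b q = 0) : patch a b = a p := by
  refine le_antisymm (Finset.sup'_le _ _ fun q _ => ?_) ?_
  · rcases eq_or_ne q p with rfl | hq
    · exact min_le_left _ _
    · exact (min_le_right _ _).trans ((hb q hq).trans_le ha.1)
  · simpa [hbp, min_eq_left ha.2] using le_patch a b p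

theorem patch_mem_Icc {a b : κ → ℝ} {p : κ} (hap : a p = 1) (hb : ∀ q, b q ∈ Icc 0 1) :
    patch a b ∈ Icc 0 1 :=
  ⟨(hb p).1.trans <| by simpa [hap, min_eq_right (hb p).2] using le_patch a b p,
    Finset.sup'_le _ _ fun q _ => (min_le_right _ _).trans (hb q).2⟩

theorem exists_one_le_of_patch_eq_one {a b : κ → ℝ} (h : patch a b = 1) :
    ∃ p, 1 ≤ a p ∧ 1 ≤ b p := by
  obtain ⟨p, -, hp⟩ := Finset.exists_mem_eq_sup' Finset.univ_nonempty fun q => min (a q) (b q)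
  rw [patch, hp] at h
  exact ⟨p, h ▸ min_le_left _ _, h ▸ min_le_right _ _⟩

theorem patch_le_patch_add {a a' b : κ → ℝ} {ε : ℝ} (hε : 0 ≤ ε) (h : ∀ p, a p ≤ a' p + ε) :
    patch a b ≤ patch a' b + ε :=
  Finset.sup'_le _ _ fun p _ =>
    calc min (a p) (b p) ≤ min (a' p + ε) (b p + ε) := min_le_min (h p) (by linarith)
      _ = min (a' p) (b p) + ε := min_add_add_right _ _ _
      _ ≤ patch a' b + ε := by linarith [le_patch a' b p]

theorem abs_patch_sub_patch_le {a a' b : κ → ℝ} {ε : ℝ} (h : ∀ p, |a p - a' p| ≤ ε) :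
    |patch a b - patch a' b| ≤ ε := by
  have hε : 0 ≤ ε := (abs_nonneg _).trans (h (Classical.arbitrary κ))
  rw [abs_sub_le_iff]
  constructor
  · linarith [patch_le_patch_add (a := a) (a' := a') (b := b) hε
      fun p => by linarith [(abs_sub_le_iff.mp (h p)).1]]
  · linarith [patch_le_patch_add (a := a') (a' := a) (b := b) hε
      fun p => by linarith [(abs_sub_le_iff.mp (h p)).2]]

theorem Continuous.patch {X : Type*} [TopologicalSpace X] {a b : κ → X → ℝ}
    (ha : ∀ p, Continuous (a p)) (hb : ∀ p, Continuous (b p)) :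
    Continuous fun x => _root_.patch (a · x) (b · x) :=
  Continuous.finset_sup'_apply _ fun p _ => (ha p).min (hb p)

end Patch

section PerfectlyNormal

variable {X : Type*} [TopologicalSpace X] [PerfectlyNormalSpace X]

theorem exists_continuous_preimage_one_eq_eqOn_zero {s t : Set X} (hs : IsClosed s)
    (ht : IsClosed t) (hst : Disjoint s t) :
    ∃ f : C(X, ℝ), (∀ x, f x ∈ Icc 0 1) ∧ f ⁻¹' {1} = s ∧ EqOn f 0 t := by
  obtain ⟨z, hzs, hz⟩ := perfectlyNormalSpace_iff_forall_isClosed_preimage_zero.mp ‹_› s hs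
  obtain ⟨v, hvs, hvt, hv⟩ := exists_continuous_zero_one_of_isClosed hs ht hst
  refine ⟨1 - z ⊔ v, fun x => ?_, ?_, fun x hx => ?_⟩
  · simp only [ContinuousMap.sub_apply, ContinuousMap.one_apply, ContinuousMap.sup_apply,
      mem_Icc, sub_nonneg, sup_le_iff, tsub_le_iff_right, le_add_iff_nonneg_right, le_sup_iff]
    exact ⟨⟨(hz x).2, (hv x).2⟩, Or.inl (hz x).1⟩
  · ext x
    simp only [mem_preimage, ContinuousMap.sub_apply, ContinuousMap.one_apply,
      ContinuousMap.sup_apply, mem_singleton_iff, sub_eq_self]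
    constructor
    · intro hx
      rw [hzs, mem_preimage, mem_singleton_iff]
      exact le_antisymm (hx ▸ le_sup_left) (hz x).1
    · intro hx
      have hzx : z x = 0 := by rw [hzs] at hx; exact hx
      simp [hzx, hvs hx]
  · simp [hvt hx, (hz x).2]

theorem exists_bumps_of_pairwise_disjoint {κ : Type*} [Finite κ] {S : κ → Set X}
    (hS : ∀ p, IsClosed (S p)) (hd : Pairwise (Disjoint on S)) :
    ∃ b : κ → C(X, ℝ), (∀ p x, b p x ∈ Icc 0 1) ∧ (∀ p, b p ⁻¹' {1} = S p) ∧
      ∀ p q, p ≠ q → EqOn (b p) 0 (S q) := by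
  have key : ∀ p, ∃ f : C(X, ℝ), (∀ x, f x ∈ Icc 0 1) ∧ f ⁻¹' {1} = S p ∧
      EqOn f 0 (⋃ (q) (_ : q ≠ p), S q) := fun p =>
    exists_continuous_preimage_one_eq_eqOn_zero (hS p)
      (isClosed_iUnion_of_finite fun q => isClosed_iUnion_of_finite fun _ => hS q)
      (disjoint_iUnion₂_right.mpr fun q hq => hd hq.symm)
  choose b hb01 hb1 hb0 using key
  exact ⟨b, hb01, hb1, fun p q hpq x hx => hb0 p (mem_biUnion (Ne.symm hpq) hx)⟩

theorem exists_seq_continuous_separatesPoints [T1Space X] [SecondCountableTopology X] :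
    ∃ u : ℕ → C(X, ℝ), (∀ n x, u n x ∈ Icc 0 1) ∧ ∀ x y, (∀ n, u n x = u n y) → x = y := by
  obtain ⟨B, hBc, -, hB⟩ := TopologicalSpace.exists_countable_basis X
  obtain ⟨U, hU⟩ := (hBc.insert univ).exists_eq_range (insert_nonempty _ _)
  have hUo : ∀ n, IsOpen (U n) := fun n => by
    rcases (hU ▸ mem_range_self n : U n ∈ insert univ B) with h | h
    · exact h ▸ isOpen_univ
    · exact hB.isOpen h
  choose u hu0 hu using fun n =>
    perfectlyNormalSpace_iff_forall_isClosed_preimage_zero.mp ‹_› _ (hUo n).isClosed_compl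
  refine ⟨u, hu, fun x y hxy => by_contra fun hne => ?_⟩
  obtain ⟨V, hVB, hxV, hVy⟩ := hB.mem_nhds_iff.mp (isOpen_compl_singleton.mem_nhds hne)
  obtain ⟨n, rfl⟩ : V ∈ range U := hU ▸ mem_insert_of_mem _ hVB
  have hy : y ∈ u n ⁻¹' {0} := hu0 n ▸ fun hy => hVy hy rfl
  have hx : x ∉ u n ⁻¹' {0} := hu0 n ▸ not_not_intro hxV
  exact hx (by simpa [hxy n] using hy)

end PerfectlyNormal

/-- Slots of the code: `none` is the marker, `some (.inl i)` carries the data `data m` and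
`some (.inr i)` the next level `m + 1`, both read through `cover i`. -/
structure ShiftCoding (G X ι : Type*) [Group G] [TopologicalSpace X] [MulAction G X] where
  marker : Set X
  cover : ι → G
  slot : Option (ι ⊕ ι) → G
  bump : Option (ι ⊕ ι) → C(X, ℝ)
  data : ℕ → C(X, ℝ)
  iUnion_cover_smul_marker : ⋃ i, cover i • marker = univ
  bump_mem_Icc : ∀ p x, bump p x ∈ Icc 0 1
  bump_preimage_one : ∀ p, bump p ⁻¹' {1} = slot p • marker
  bump_eqOn_zero : ∀ p q, p ≠ q → EqOn (bump p) 0 (slot q • marker)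
  data_mem_Icc : ∀ n x, data n x ∈ Icc 0 1

namespace ShiftCoding

variable {G X ι : Type*} [Group G] [TopologicalSpace X] [MulAction G X]

def slotValue (K : ShiftCoding G X ι) (Φ : ℕ × X → ℝ) (m : ℕ) (w : X) : Option (ι ⊕ ι) → ℝ
  | none => 1
  | some (.inl i) => (1 + K.data m ((K.cover i * (K.slot (some (.inl i)))⁻¹) • w)) / 4
  | some (.inr i) => (1 + Φ (m + 1, (K.cover i * (K.slot (some (.inr i)))⁻¹) • w)) / 4

def stepFun [Fintype ι] (K : ShiftCoding G X ι) (Φ : ℕ × X → ℝ) (z : ℕ × X) : ℝ :=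
  patch (K.slotValue Φ z.1 z.2) (K.bump · z.2)

variable {K : ShiftCoding G X ι}

theorem exists_inv_smul_mem_marker (x : X) : ∃ i, (K.cover i)⁻¹ • x ∈ K.marker := by
  have hx : x ∈ ⋃ i, K.cover i • K.marker := K.iUnion_cover_smul_marker ▸ mem_univ x
  simpa [← mem_smul_set_iff_inv_smul_mem] using hx

theorem slotValue_some_mem_Icc {Φ : ℕ × X → ℝ} (hΦ : ∀ z, Φ z ∈ Icc 0 1) (m : ℕ) (w : X)
    (s : ι ⊕ ι) : K.slotValue Φ m w (some s) ∈ Icc (1 / 4) (1 / 2) := by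
  have quarter : ∀ v : ℝ, v ∈ Icc 0 1 → (1 + v) / 4 ∈ Icc (1 / 4) (1 / 2) := fun v hv =>
    ⟨by linarith [hv.1], by linarith [hv.2]⟩
  rcases s with i | i
  · exact quarter _ (K.data_mem_Icc _ _)
  · exact quarter _ (hΦ _)

theorem slotValue_mem_Icc {Φ : ℕ × X → ℝ} (hΦ : ∀ z, Φ z ∈ Icc 0 1) (m : ℕ) (w : X) :
    ∀ p, K.slotValue Φ m w p ∈ Icc 0 1
  | none => ⟨zero_le_one, le_rfl⟩
  | some s => by
    have := slotValue_some_mem_Icc (K := K) hΦ m w s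
    exact ⟨by linarith [this.1], by linarith [this.2]⟩

theorem abs_slotValue_sub_le (Φ Ψ : ℕ × X →ᵇ ℝ) (m : ℕ) (w : X) :
    ∀ p, |K.slotValue Φ m w p - K.slotValue Ψ m w p| ≤ 4⁻¹ * dist Φ Ψ
  | none | some (.inl _) => by simp only [slotValue, sub_self, abs_zero]; positivity
  | some (.inr i) => by
    have := Φ.dist_coe_le_dist (g := Ψ) (m + 1, (K.cover i * (K.slot (some (.inr i)))⁻¹) • w)
    rw [Real.dist_eq] at this
    simp only [slotValue]
    rw [← sub_div, add_sub_add_left_eq_sub, abs_div, abs_of_pos (by norm_num : (0 : ℝ) < 4)]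
    linarith

variable [Fintype ι]

theorem stepFun_mem_Icc (Φ : ℕ × X → ℝ) (z : ℕ × X) : K.stepFun Φ z ∈ Icc 0 1 :=
  patch_mem_Icc (p := none) rfl (K.bump_mem_Icc · z.2)

theorem stepFun_of_mem {Φ : ℕ × X → ℝ} (hΦ : ∀ z, Φ z ∈ Icc 0 1) {m : ℕ} {w : X}
    {p : Option (ι ⊕ ι)} (hw : w ∈ K.slot p • K.marker) :
    K.stepFun Φ (m, w) = K.slotValue Φ m w p :=
  patch_eq_of_eq_one (slotValue_mem_Icc hΦ m w p) (by rwa [← K.bump_preimage_one p] at hw)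
    fun q hq => K.bump_eqOn_zero q p hq hw

theorem mem_of_stepFun_eq_one {Φ : ℕ × X → ℝ} (hΦ : ∀ z, Φ z ∈ Icc 0 1) {m : ℕ} {w : X}
    (h : K.stepFun Φ (m, w) = 1) : w ∈ K.slot none • K.marker := by
  obtain ⟨p, hslot, hbump⟩ := exists_one_le_of_patch_eq_one h
  rcases p with _ | s
  · rw [← K.bump_preimage_one]
    exact le_antisymm (K.bump_mem_Icc none w).2 hbump
  · have := (slotValue_some_mem_Icc (K := K) hΦ m w s).2
    linarith

variable [ContinuousConstSMul G X]

theorem continuous_stepFun {Φ : ℕ × X → ℝ} (hΦ : Continuous Φ) : Continuous (K.stepFun Φ) := by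
  refine continuous_prod_of_discrete_left.mpr fun m => ?_
  refine Continuous.patch (fun p => ?_) fun p => (K.bump p).continuous
  rcases p with _ | i | i <;> simp only [slotValue] <;> fun_prop

variable (K)

def step (Φ : ℕ × X →ᵇ ℝ) : ℕ × X →ᵇ ℝ :=
  .ofNormedAddCommGroup (K.stepFun Φ) (continuous_stepFun Φ.continuous) 1 fun z =>
    abs_le.mpr ⟨by linarith [(stepFun_mem_Icc (K := K) Φ z).1], (stepFun_mem_Icc Φ z).2⟩

theorem contractingWith_step : ContractingWith 4⁻¹ K.step := by
  refine ⟨by norm_num, LipschitzWith.of_dist_le_mul fun Φ Ψ => ?_⟩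
  rw [NNReal.coe_inv, NNReal.coe_ofNat]
  exact (BoundedContinuousFunction.dist_le (by positivity)).mpr fun z =>
    abs_patch_sub_patch_le (abs_slotValue_sub_le Φ Ψ z.1 z.2)

def code : ℕ × X →ᵇ ℝ :=
  ContractingWith.fixedPoint K.step K.contractingWith_step

theorem stepFun_code : K.stepFun K.code = K.code :=
  congrArg DFunLike.coe K.contractingWith_step.fixedPoint_isFixedPt

variable {K}

theorem code_mem_Icc (z : ℕ × X) : K.code z ∈ Icc 0 1 :=
  K.stepFun_code ▸ stepFun_mem_Icc _ z

theorem code_of_mem {m : ℕ} {w : X} {p : Option (ι ⊕ ι)} (hw : w ∈ K.slot p • K.marker) :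
    K.code (m, w) = K.slotValue K.code m w p :=
  (congrFun K.stepFun_code (m, w)).symm.trans (stepFun_of_mem code_mem_Icc hw)

theorem code_slot_none_eq_one_iff {m : ℕ} {w : X} :
    K.code (m, K.slot none • w) = 1 ↔ w ∈ K.marker := by
  refine ⟨fun h => ?_, fun hw => code_of_mem (smul_mem_smul_set hw)⟩
  rw [← congrFun K.stepFun_code] at h
  exact smul_mem_smul_set_iff.mp (mem_of_stepFun_eq_one code_mem_Icc h)

theorem code_slot_inl {m : ℕ} {w : X} (hw : w ∈ K.marker) (i : ι) :
    K.code (m, K.slot (some (.inl i)) • w) = (1 + K.data m (K.cover i • w)) / 4 := by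
  rw [code_of_mem (smul_mem_smul_set hw)]
  simp [slotValue, mul_smul]

theorem code_slot_inr {m : ℕ} {w : X} (hw : w ∈ K.marker) (i : ι) :
    K.code (m, K.slot (some (.inr i)) • w) = (1 + K.code (m + 1, K.cover i • w)) / 4 := by
  rw [code_of_mem (smul_mem_smul_set hw)]
  simp [slotValue, mul_smul]

theorem inv_smul_mem_marker_of_orbit {m : ℕ} {x y : X}
    (h : ∀ g : G, K.code (m, g • x) = K.code (m, g • y)) {i : ι}
    (hx : (K.cover i)⁻¹ • x ∈ K.marker) : (K.cover i)⁻¹ • y ∈ K.marker := by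
  rwa [← code_slot_none_eq_one_iff (m := m), smul_smul, ← h, ← smul_smul,
    code_slot_none_eq_one_iff]

theorem data_eq_of_orbit {m : ℕ} {x y : X}
    (h : ∀ g : G, K.code (m, g • x) = K.code (m, g • y)) : K.data m x = K.data m y := by
  obtain ⟨i, hx⟩ := exists_inv_smul_mem_marker (K := K) x
  have hy := inv_smul_mem_marker_of_orbit h hx
  have := h (K.slot (some (.inl i)) * (K.cover i)⁻¹)
  rw [mul_smul, mul_smul, code_slot_inl hx, code_slot_inl hy, smul_inv_smul,
    smul_inv_smul] at this
  linarith

theorem code_succ_eq_of_orbit {m : ℕ} {x y : X}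
    (h : ∀ g : G, K.code (m, g • x) = K.code (m, g • y)) :
    K.code (m + 1, x) = K.code (m + 1, y) := by
  obtain ⟨i, hx⟩ := exists_inv_smul_mem_marker (K := K) x
  have hy := inv_smul_mem_marker_of_orbit h hx
  have := h (K.slot (some (.inr i)) * (K.cover i)⁻¹)
  rw [mul_smul, mul_smul, code_slot_inr hx, code_slot_inr hy, smul_inv_smul,
    smul_inv_smul] at this
  linarith

theorem eq_of_code_orbit (hdata : ∀ x y, (∀ n, K.data n x = K.data n y) → x = y) {x y : X}
    (h : ∀ g : G, K.code (0, g • x) = K.code (0, g • y)) : x = y := by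
  have hlevel : ∀ m, ∀ g : G, K.code (m, g • x) = K.code (m, g • y) := by
    intro m
    induction m with
    | zero => exact h
    | succ m ih =>
      exact fun g => code_succ_eq_of_orbit fun g' => by simpa [smul_smul] using ih (g' * g)
  exact hdata x y fun n => data_eq_of_orbit (hlevel n)

end ShiftCoding

section OrbitCoding

variable {G X ι : Type*} [Group G] [TopologicalSpace X] [MulAction G X]
  [ContinuousConstSMul G X]

theorem exists_continuous_separating_orbits [PerfectlyNormalSpace X] [T1Space X]
    [SecondCountableTopology X] [Fintype ι] {M : Set X} (hM : IsClosed M) {c : ι → G}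
    (hc : ⋃ i, c i • M = univ) {t : Option (ι ⊕ ι) → G}
    (ht : Pairwise (Disjoint on fun p => t p • M)) :
    ∃ F : C(X, ℝ), (∀ x, F x ∈ Icc 0 1) ∧ ∀ x y, (∀ g : G, F (g • x) = F (g • y)) → x = y := by
  obtain ⟨b, hb01, hb1, hb0⟩ := exists_bumps_of_pairwise_disjoint (fun p => hM.smul (t p)) ht
  obtain ⟨u, hu01, hu⟩ := exists_seq_continuous_separatesPoints (X := X)
  let K : ShiftCoding G X ι := ⟨M, c, t, b, u, hc, hb01, hb1, hb0, hu01⟩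
  exact ⟨⟨fun x => K.code (0, x), by fun_prop⟩, fun x => ShiftCoding.code_mem_Icc _,
    fun x y h => ShiftCoding.eq_of_code_orbit hu h⟩

theorem isEmbedding_of_separating_orbits [CompactSpace X] {F : C(X, ℝ)}
    (hF : ∀ x y, (∀ g : G, F (g • x) = F (g • y)) → x = y) :
    IsEmbedding fun x (g : G) => F (g⁻¹ • x) := by
  refine (Continuous.isClosedEmbedding (by fun_prop) fun x y hxy => ?_).isEmbedding
  exact hF x y fun g => by simpa using congrFun hxy g⁻¹

end OrbitCoding

end

theorem pairwise_disjoint_smul_iUnion {G X ι κ : Type*} [SMul G X] {W : ι → Set X} {t : κ → G}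
    (ht : Injective t) (hW : ∀ p q i j, (t p, i) ≠ (t q, j) → Disjoint (t p • W i) (t q • W j)) :
    Pairwise (Disjoint on fun p => t p • ⋃ i, W i) := fun p q hpq => by
  simp only [onFun, smul_set_iUnion, disjoint_iUnion_left, disjoint_iUnion_right]
  exact fun j i => hW p q i j fun h => hpq (ht (Prod.ext_iff.mp h).1)

theorem embedding_into_shift_of_paradoxical_covers_general {G X : Type*} [Group G]
    [TopologicalSpace X] [CompactSpace X] [TopologicalSpace.MetrizableSpace X]
    [MulAction G X] [ContinuousConstSMul G X]
    (φ : FreeGroup (Fin 2) →* G) (hφ : Function.Injective φ)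
    (hcov : ∀ D : Finset G, (D : Set G) ⊆ Set.range φ →
      ∃ (V : Fin 3 → Set X) (c : Fin 3 → G),
        (∀ i, IsOpen (V i)) ∧
        (∀ g ∈ D, ∀ g' ∈ D, ∀ i i' : Fin 3, (g, i) ≠ (g', i') →
          Disjoint (g • closure (V i)) (g' • closure (V i'))) ∧
        (⋃ i, c i • V i) = Set.univ) :
    ∃ f : X → G → ℝ,
      (∀ x g, f x g ∈ Set.Icc (0 : ℝ) 1) ∧
      Topology.IsEmbedding f ∧
      ∀ (g : G) (x : X), f (g • x) = fun h => f x (g⁻¹ * h) := by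
  classical
  let t : Option (Fin 3 ⊕ Fin 3) → G := fun p => φ (Infinite.natEmbedding _ (Encodable.encode p))
  have ht : Injective t :=
    hφ.comp ((Infinite.natEmbedding _).injective.comp Encodable.encode_injective)
  obtain ⟨V, c, -, hdisj, hcover⟩ := hcov (Finset.univ.image t) (by simp [t, range_subset_iff])
  have hcover' : ⋃ i, c i • ⋃ j, closure (V j) = univ := eq_univ_of_subset
    (iUnion_mono fun i => smul_set_mono (subset_iUnion_of_subset i subset_closure)) hcover
  have hmem : ∀ p, t p ∈ Finset.univ.image t := fun p =>
    Finset.mem_image_of_mem t (Finset.mem_univ p)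
  obtain ⟨F, hF01, hF⟩ := exists_continuous_separating_orbits
    (isClosed_iUnion_of_finite fun i => isClosed_closure) hcover'
    (pairwise_disjoint_smul_iUnion ht fun p q => hdisj _ (hmem p) _ (hmem q))
  exact ⟨fun x g => F (g⁻¹ • x), fun x g => hF01 _, isEmbedding_of_separating_orbits hF,
    fun g x => funext fun h => by simp [mul_smul]⟩

/-- Let `G` be a countable group containing a free subgroup on two
generators (realized as the range of an injective homomorphism `φ` from the free group on
two generators), and let `G ↷ X` be a free action on a compact metrizable space. Suppose
that for every finite `D` contained in this free subgroup there are open sets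
`V 0, V 1, V 2` and elements `c 0, c 1, c 2 ∈ G` such that the translates `g • closure (V i)`,
`g ∈ D`, `i ∈ {0, 1, 2}`, are pairwise disjoint while `⋃ i, c i • V i = X`. Then `X` embeds
`G`-equivariantly into `[0, 1]^G` with the left shift action. -/
theorem embedding_into_shift_of_paradoxical_covers {G X : Type*} [Group G] [Countable G]
    [Infinite G] [TopologicalSpace X] [CompactSpace X] [TopologicalSpace.MetrizableSpace X]
    [MulAction G X] [ContinuousConstSMul G X]
    (hfree : ∀ (g : G) (x : X), g • x = x → g = 1)
    (φ : FreeGroup (Fin 2) →* G) (hφ : Function.Injective φ)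
    (hcov : ∀ D : Finset G, (D : Set G) ⊆ Set.range φ →
      ∃ (V : Fin 3 → Set X) (c : Fin 3 → G),
        (∀ i, IsOpen (V i)) ∧
        (∀ g ∈ D, ∀ g' ∈ D, ∀ i i' : Fin 3, (g, i) ≠ (g', i') →
          Disjoint (g • closure (V i)) (g' • closure (V i'))) ∧
        (⋃ i, c i • V i) = Set.univ) :
    ∃ f : X → G → ℝ,
      (∀ x g, f x g ∈ Set.Icc (0 : ℝ) 1) ∧
      Topology.IsEmbedding f ∧
      ∀ (g : G) (x : X), f (g • x) = fun h => f x (g⁻¹ * h) :=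
  embedding_into_shift_of_paradoxical_covers_general φ hφ hcov
end

section
/- Let L, M ⊂ G be finite sets and let U ⊂ X be an L-free marker set with MU = X. Then there exists δ > 0 such that U^{-δ} is an L-free marker set with MU^{-δ} = X; in particular, the closure of U^{-δ} is contained in U and is L-free (its L-translates are pairwise disjoint). -/
open Set MeasureTheory Pointwise Topology

/-- The translates `g • U`, `g ∈ L`, are pairwise disjoint. -/
def LFreeSet {G X : Type*} [Group G] [MulAction G X] (L : Finset G) (U : Set X) : Prop :=
  ∀ g ∈ L, ∀ h ∈ L, g ≠ h → Disjoint (g • U) (h • U)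

/-- `U` is a marker set: it is open and `G • U = X`. -/
def IsMarkerSet (G : Type*) {X : Type*} [Group G] [MulAction G X] [TopologicalSpace X]
    (U : Set X) : Prop :=
  IsOpen U ∧ (⋃ g : G, g • U) = Set.univ

/-- The action has the marker property: for every finite `L ⊆ G` there is an `L`-free
marker set. -/
def MarkerProperty (G X : Type*) [Group G] [MulAction G X] [TopologicalSpace X] : Prop :=
  ∀ L : Finset G, ∃ U : Set X, IsMarkerSet G U ∧ LFreeSet L U

/-- The finite set `S` is `(K, ε)`-invariant: `|⋂_{g ∈ K} gS| > (1 - ε)|S|`. -/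
def FolnerInv {G : Type*} [Group G] (K : Finset G) (ε : ℝ) (S : Finset G) : Prop :=
  (1 - ε) * (S.card : ℝ) < ((⋂ g ∈ K, g • (S : Set G)).ncard : ℝ)

/-- `G` is amenable: there exist `(K, ε)`-invariant finite subsets for all `K` and `ε > 0`. -/
def IsAmenableGroup (G : Type*) [Group G] : Prop :=
  ∀ (K : Finset G) (ε : ℝ), 0 < ε → ∃ S : Finset G, FolnerInv K ε S

/-- The footprint `SV = ⋃_{g ∈ S} gV` of a tower `(S, V)`. -/
def Footprint {G X : Type*} [Group G] [MulAction G X] (S : Finset G) (V : Set X) : Set X :=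
  ⋃ g ∈ S, g • V

/-- `{(S i, V i)}` is a castle: the bases are open and `S i`-free and the footprints are
pairwise disjoint. -/
def IsCastle {G X : Type*} [Group G] [MulAction G X] [TopologicalSpace X] {n : ℕ}
    (S : Fin n → Finset G) (V : Fin n → Set X) : Prop :=
  (∀ i, IsOpen (V i)) ∧ (∀ i, LFreeSet (S i) (V i)) ∧
    (Pairwise fun i j => Disjoint (Footprint (S i) (V i)) (Footprint (S j) (V j)))

/-- Upper Banach density `D̄(A) = inf_F sup_x |A ∩ Fx| / |F|`. -/
noncomputable def upperBD (G : Type*) {X : Type*} [Group G] [MulAction G X] (A : Set X) : ℝ :=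
  ⨅ F : {F : Finset G // F.Nonempty},
    ⨆ x : X, ((A ∩ ((· • x) '' (F.1 : Set G))).ncard : ℝ) / (F.1.card : ℝ)

/-- Lower Banach density `D̲(A) = sup_F inf_x |A ∩ Fx| / |F|`. -/
noncomputable def lowerBD (G : Type*) {X : Type*} [Group G] [MulAction G X] (A : Set X) : ℝ :=
  ⨆ F : {F : Finset G // F.Nonempty},
    ⨅ x : X, ((A ∩ ((· • x) '' (F.1 : Set G))).ncard : ℝ) / (F.1.card : ℝ)

/-- The Uniform Rokhlin Property. -/
def URP (G X : Type*) [Group G] [MulAction G X] [TopologicalSpace X] : Prop :=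
  ∀ (K : Finset G) (ε : ℝ), 0 < ε →
    ∃ (n : ℕ) (S : Fin n → Finset G) (V : Fin n → Set X),
      IsCastle S V ∧ (∀ i, FolnerInv K ε (S i)) ∧
        upperBD G (Set.univ \ ⋃ i, Footprint (S i) (V i)) < ε

/-- Dynamical subequivalence of a (closed) set `A` to an open set `B`: `A` admits a finite
open cover whose pieces can be translated into pairwise disjoint subsets of `B`. -/
def Subeq (G : Type*) {X : Type*} [Group G] [MulAction G X] [TopologicalSpace X]
    (A B : Set X) : Prop :=
  ∃ (n : ℕ) (U : Fin n → Set X) (g : Fin n → G),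
    (∀ j, IsOpen (U j)) ∧ A ⊆ (⋃ j, U j) ∧ (∀ j, g j • U j ⊆ B) ∧
      (Pairwise fun j k => Disjoint (g j • U j) (g k • U k))

/-- `μ` is a `G`-invariant Borel probability measure. -/
def InvariantProb (G : Type*) {X : Type*} [Group G] [MulAction G X] [MeasurableSpace X]
    (μ : Measure X) : Prop :=
  IsProbabilityMeasure μ ∧ ∀ g : G, Measure.map (fun x => g • x) μ = μ

/-- The action has comparison. -/
def HasComparison (G X : Type*) [Group G] [MulAction G X] [TopologicalSpace X]
    [MeasurableSpace X] : Prop :=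
  ∀ A B : Set X, IsClosed A → IsOpen B →
    (∀ μ : Measure X, InvariantProb G μ → μ A < μ B) → Subeq G A B

/-- URPC: the Uniform Rokhlin Property together with comparison. -/
def URPC (G X : Type*) [Group G] [MulAction G X] [TopologicalSpace X] [MeasurableSpace X] :
    Prop :=
  URP G X ∧ HasComparison G X

/-- The subequivalence `Σᵢ [A i] ≺ Σⱼ [B j]` in the type semigroup: for all closed sets
`C i ⊆ A i` there are a finite family of open sets `U k`, group elements `g k`, an
assignment `a` recording which `C i` the set `U k` helps to cover, and an assignment `b`
recording into which `B j` the translate `g k • U k` is placed, such that the translates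
assigned to a common `B j` are pairwise disjoint. -/
def FamSubeq (G : Type*) {X : Type*} [Group G] [MulAction G X] [TopologicalSpace X]
    {ι κ : Type*} [Fintype ι] [Fintype κ] (A : ι → Set X) (B : κ → Set X) : Prop :=
  ∀ C : ι → Set X, (∀ i, IsClosed (C i)) → (∀ i, C i ⊆ A i) →
    ∃ (n : ℕ) (U : Fin n → Set X) (g : Fin n → G) (a : Fin n → ι) (b : Fin n → κ),
      (∀ k, IsOpen (U k)) ∧
      (∀ i, C i ⊆ ⋃ (k) (_ : a k = i), U k) ∧
      (∀ k, g k • U k ⊆ B (b k)) ∧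
      (∀ k l, k ≠ l → b k = b l → Disjoint (g k • U k) (g l • U l))

/-- The inner set `A^{-δ} = {x : ρ(x, X \ A) > δ}`. -/
def innerSet {X : Type*} [MetricSpace X] (δ : ℝ) (A : Set X) : Set X :=
  (Metric.cthickening δ Aᶜ)ᶜ


private lemma lfree_mono {G X : Type*} [Group G] [MulAction G X] {L : Finset G}
    {U V : Set X} (h : V ⊆ U) (hU : LFreeSet L U) : LFreeSet L V :=
  fun g hg g' hg' hne => (hU g hg g' hg' hne).mono (Set.smul_set_mono h) (Set.smul_set_mono h)

private lemma closure_innerSet_subset {X : Type*} [MetricSpace X] {δ : ℝ} (hδ : 0 < δ)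
    {U : Set X} (hU : IsOpen U) : closure (innerSet δ U) ⊆ U := by
  have hsub : innerSet δ U ⊆ {x | ENNReal.ofReal δ ≤ EMetric.infEdist x Uᶜ} := by
    intro x hx
    have := hx
    rw [innerSet, Set.mem_compl_iff, Metric.mem_cthickening_iff] at this
    exact le_of_not_ge this
  have hclosed : IsClosed {x | ENNReal.ofReal δ ≤ EMetric.infEdist x Uᶜ} := by
    have : Continuous fun x : X => EMetric.infEdist x Uᶜ := EMetric.continuous_infEdist
    exact IsClosed.preimage this isClosed_Ici
  intro x hx
  have hx2 : ENNReal.ofReal δ ≤ EMetric.infEdist x Uᶜ :=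
    (hclosed.closure_subset_iff.mpr hsub) hx
  have hpos' : (0 : ENNReal) < EMetric.infEdist x Uᶜ :=
    lt_of_lt_of_le (ENNReal.ofReal_pos.mpr hδ) hx2
  have hpos : EMetric.infEdist x Uᶜ ≠ 0 := hpos'.ne' 
  have : x ∉ closure Uᶜ := fun hmem =>
    hpos (EMetric.mem_closure_iff_infEdist_zero.mp hmem)
  rw [hU.isClosed_compl.closure_eq] at this
  simpa using this

/-- If `U` is an `L`-free marker set with `MU = X`, then for some `δ > 0`
the set `U^{-δ}` is an `L`-free marker set with `M U^{-δ} = X`; in particular its closure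
is contained in `U` and is `L`-free. -/
theorem marker_set_shrinking {G X : Type*} [Group G] [Countable G] [Infinite G]
    [MetricSpace X] [CompactSpace X] [MulAction G X] [ContinuousConstSMul G X]
    (hfree : ∀ (g : G) (x : X), g • x = x → g = 1)
    (L M : Finset G) (U : Set X)
    (hU : IsMarkerSet G U) (hUfree : LFreeSet L U) (hM : Footprint M U = Set.univ) :
    ∃ δ : ℝ, 0 < δ ∧
      IsMarkerSet G (innerSet δ U) ∧ LFreeSet L (innerSet δ U) ∧
      Footprint M (innerSet δ U) = Set.univ ∧
      closure (innerSet δ U) ⊆ U ∧ LFreeSet L (closure (innerSet δ U)) := by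
  by_cases hUniv : U = Set.univ
  · refine ⟨1, one_pos, ?_, ?_, ?_, ?_, ?_⟩ <;>
      simp only [hUniv, innerSet, Set.compl_univ, Metric.cthickening_empty,
        Set.compl_empty, closure_univ] <;>
      first
        | exact hUniv ▸ hU
        | exact hUniv ▸ hUfree
        | exact hUniv ▸ hM
        | exact Set.Subset.rfl
  · obtain ⟨z, hz⟩ := Set.nonempty_compl.mpr hUniv
    have hUc : Uᶜ.Nonempty := ⟨z, hz⟩
    have : Nonempty X := ⟨z⟩
    have hMne : M.Nonempty := by
      have hzF : z ∈ Footprint M U := hM ▸ Set.mem_univ z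
      obtain ⟨g, hg, -⟩ := Set.mem_iUnion₂.mp hzF
      exact ⟨g, hg⟩
    set f : X → ℝ := fun x => M.sup' hMne fun g => Metric.infDist (g⁻¹ • x) Uᶜ with hf
    have hfcont : Continuous f :=
      Continuous.finset_sup'_apply hMne fun g _ =>
        (Metric.continuous_infDist_pt Uᶜ).comp (continuous_const_smul g⁻¹)
    have hfpos : ∀ x, 0 < f x := by
      intro x
      have hxF : x ∈ Footprint M U := hM ▸ Set.mem_univ x
      obtain ⟨g, hg, hxg⟩ := Set.mem_iUnion₂.mp hxF
      have hmem : g⁻¹ • x ∈ U := by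
        rwa [Set.mem_smul_set_iff_inv_smul_mem] at hxg
      have hpos : 0 < Metric.infDist (g⁻¹ • x) Uᶜ :=
        (hU.1.isClosed_compl.notMem_iff_infDist_pos hUc).mp (by simpa using hmem)
      exact lt_of_lt_of_le hpos (Finset.le_sup' (fun g => Metric.infDist (g⁻¹ • x) Uᶜ) hg)
    obtain ⟨x₀, -, hmin⟩ :=
      isCompact_univ.exists_isMinOn Set.univ_nonempty hfcont.continuousOn
    refine ⟨f x₀ / 2, half_pos (hfpos x₀), ?_⟩
    set δ := f x₀ / 2 with hδdef
    have hδ : 0 < δ := half_pos (hfpos x₀)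
    have key : ∀ x : X, ∃ g ∈ M, g⁻¹ • x ∈ innerSet δ U := by
      intro x
      obtain ⟨g, hg, hgeq⟩ := Finset.exists_mem_eq_sup' hMne
        fun g => Metric.infDist (g⁻¹ • x) Uᶜ
      refine ⟨g, hg, ?_⟩
      have hlt : δ < Metric.infDist (g⁻¹ • x) Uᶜ := by
        have h1 : f x₀ ≤ f x := hmin (Set.mem_univ x)
        have h2 : δ < f x₀ := half_lt_self (hfpos x₀)
        have h3 : f x = Metric.infDist (g⁻¹ • x) Uᶜ := hgeq
        exact ((h2.trans_le h1).trans_eq h3)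
      rw [innerSet, Set.mem_compl_iff, Metric.mem_cthickening_iff]
      intro hle
      have : Metric.infDist (g⁻¹ • x) Uᶜ ≤ δ :=
        ENNReal.toReal_le_of_le_ofReal hδ.le hle
      exact absurd this (not_le.mpr hlt)
    have hFoot : Footprint M (innerSet δ U) = Set.univ := by
      refine Set.eq_univ_of_forall fun x => ?_
      obtain ⟨g, hg, hx⟩ := key x
      exact Set.mem_iUnion₂.mpr ⟨g, hg, ⟨g⁻¹ • x, hx, smul_inv_smul g x⟩⟩
    have hOpen : IsOpen (innerSet δ U) :=
      (Metric.isClosed_cthickening).isOpen_compl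
    have hclsub : closure (innerSet δ U) ⊆ U := closure_innerSet_subset hδ hU.1
    have hsubU : innerSet δ U ⊆ U := subset_closure.trans hclsub
    refine ⟨⟨hOpen, ?_⟩, lfree_mono hsubU hUfree, hFoot, hclsub,
      lfree_mono hclsub hUfree⟩
    refine Set.eq_univ_of_forall fun x => ?_
    obtain ⟨g, hg, hx⟩ := key x
    exact Set.mem_iUnion.mpr ⟨g, ⟨g⁻¹ • x, hx, smul_inv_smul g x⟩⟩
end

section
/- Let L ⊂ G be a finite set, let A ⊂ X be an L-free open set, and let B ⊂ X be an open set such that L^{-1}B = X. Then A is dynamically subequivalent to B, i.e., A ≺ B. -/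
open Set MeasureTheory Pointwise Topology

/-- If `A` is an `L`-free open set and `B` is open with `L⁻¹B = X`, then
`A ≺ B`; since `A` is open this means that every closed subset of `A` is dynamically
subequivalent to `B`. -/
theorem lfree_subeq_of_inv_translates_cover {G X : Type*} [Group G] [Countable G] [Infinite G]
    [TopologicalSpace X] [CompactSpace X] [TopologicalSpace.MetrizableSpace X]
    [MulAction G X] [ContinuousConstSMul G X]
    (hfree : ∀ (g : G) (x : X), g • x = x → g = 1)
    (L : Finset G) (A B : Set X)
    (hAopen : IsOpen A) (hAfree : LFreeSet L A)
    (hBopen : IsOpen B) (hBcover : (⋃ g ∈ L, g⁻¹ • B) = Set.univ) :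
    ∀ A' : Set X, IsClosed A' → A' ⊆ A → Subeq G A' B := by
  intro A' _ hA'
  classical
  refine ⟨L.card, fun j => A ∩ ((L.equivFin.symm j : G)⁻¹ • B),
    fun j => (L.equivFin.symm j : G), ?_, ?_, ?_, ?_⟩
  · intro j
    exact hAopen.inter (hBopen.smul _)
  · intro x hx
    have hxA : x ∈ A := hA' hx
    have hxU : x ∈ ⋃ g ∈ L, g⁻¹ • B := hBcover ▸ Set.mem_univ x
    rcases Set.mem_iUnion₂.1 hxU with ⟨g, hg, hgx⟩
    refine Set.mem_iUnion.2 ⟨L.equivFin ⟨g, hg⟩, ⟨hxA, ?_⟩⟩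
    simpa using hgx
  · intro j
    calc (L.equivFin.symm j : G) • (A ∩ ((L.equivFin.symm j : G)⁻¹ • B))
        ⊆ (L.equivFin.symm j : G) • ((L.equivFin.symm j : G)⁻¹ • B) :=
          Set.smul_set_mono Set.inter_subset_right
      _ = B := smul_inv_smul _ _
  · intro j k hjk
    have hne : (L.equivFin.symm j : G) ≠ (L.equivFin.symm k : G) := by
      intro h
      exact hjk (L.equivFin.symm.injective (Subtype.coe_injective h))
    have := hAfree _ (L.equivFin.symm j).2 _ (L.equivFin.symm k).2 hne
    exact this.mono (Set.smul_set_mono Set.inter_subset_left)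
      (Set.smul_set_mono Set.inter_subset_left)
end

section
/- Let G be a countably infinite group acting freely by homeomorphisms on a compact metrizable space X, let k ∈ ℕ, and let B ⊂ X be a marker set. Then there exists a finite set L ⊂ G such that k[U] ≺ [B] in the type semigroup for every L-free open set U ⊂ X. -/
open Set MeasureTheory Pointwise Topology

lemma exists_sep {G : Type*} [Group G] [Infinite G] [DecidableEq G] (T : Finset G) :
    ∀ k : ℕ, ∃ s : Fin k → G, ∀ i j : Fin k, i ≠ j → s i * (s j)⁻¹ ∉ T := by
  intro k
  induction k with
  | zero => exact ⟨fun i => 1, fun i => i.elim0⟩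
  | succ n ih =>
    obtain ⟨s, hs⟩ := ih
    obtain ⟨x, hx⟩ := Infinite.exists_notMem_finset
      ((Finset.univ : Finset (Fin n)).biUnion fun j =>
        T.image (· * s j) ∪ T.image (·⁻¹ * s j))
    have hx' : ∀ j : Fin n, x ∉ T.image (· * s j) ∧ x ∉ T.image (·⁻¹ * s j) := by
      intro j
      exact ⟨fun hmem => hx (Finset.mem_biUnion.mpr
          ⟨j, Finset.mem_univ _, Finset.mem_union_left _ hmem⟩),
        fun hmem => hx (Finset.mem_biUnion.mpr
          ⟨j, Finset.mem_univ _, Finset.mem_union_right _ hmem⟩)⟩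
    refine ⟨Fin.cons x s, ?_⟩
    intro i j hij hmem
    induction i using Fin.cases with
    | zero =>
      induction j using Fin.cases with
      | zero => exact hij rfl
      | succ j' =>
        simp only [Fin.cons_zero, Fin.cons_succ] at hmem
        exact (hx' j').1 (Finset.mem_image.mpr ⟨x * (s j')⁻¹, hmem, by group⟩)
    | succ i' =>
      induction j using Fin.cases with
      | zero =>
        simp only [Fin.cons_zero, Fin.cons_succ] at hmem
        exact (hx' i').2 (Finset.mem_image.mpr ⟨s i' * x⁻¹, hmem, by group⟩)
      | succ j' =>
        simp only [Fin.cons_succ] at hmem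
        exact hs i' j' (fun h => hij (by rw [h])) hmem

/-- For a free action of a countably infinite group, `k ∈ ℕ` and a marker
set `B`, there is a finite `L ⊆ G` such that `k[U] ≺ [B]` in the type semigroup for every
`L`-free open set `U`. -/
theorem mult_lfree_subeq_marker {G X : Type*} [Group G] [Countable G] [Infinite G]
    [TopologicalSpace X] [CompactSpace X] [TopologicalSpace.MetrizableSpace X]
    [MulAction G X] [ContinuousConstSMul G X]
    (hfree : ∀ (g : G) (x : X), g • x = x → g = 1)
    (k : ℕ) (B : Set X) (hB : IsMarkerSet G B) :
    ∃ L : Finset G, ∀ U : Set X, IsOpen U → LFreeSet L U →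
      FamSubeq G (fun _ : Fin k => U) (fun _ : Fin 1 => B) := by
  classical
  -- finite subcover of X by translates of B
  obtain ⟨hBo, hBu⟩ := hB
  obtain ⟨F, hF⟩ := IsCompact.elim_finite_subcover isCompact_univ
    (fun g : G => g • B) (fun g => hBo.smul g) (by rw [hBu])
  -- separated elements
  set T : Finset G := (F ×ˢ F).image fun p => p.1 * p.2⁻¹ with hT
  obtain ⟨s, hs⟩ := exists_sep (G := G) T k
  set L : Finset G := (F ×ˢ (Finset.univ : Finset (Fin k))).image
    (fun p => p.1⁻¹ * s p.2) with hL
  refine ⟨L, fun U hU hUfree => ?_⟩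
  intro C hC hCsub
  set ι := Fin k × {x // x ∈ F} with hι
  let e : Fin (Fintype.card ι) ≃ ι := (Fintype.equivFin ι).symm
  refine ⟨Fintype.card ι,
    (fun p : ι => U ∩ (((s p.1)⁻¹ * (p.2 : G)) • B)) ∘ e,
    (fun p : ι => (p.2 : G)⁻¹ * s p.1) ∘ e,
    (fun p : ι => p.1) ∘ e, fun _ => 0, ?_, ?_, ?_, ?_⟩
  · intro j
    exact (hU.inter (hBo.smul _))
  · intro i
    refine (hCsub i).trans ?_
    intro x hx
    have hx2 : (s i) • x ∈ ⋃ g ∈ F, g • B := hF (mem_univ _)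
    obtain ⟨g, hgF, hgx⟩ := mem_iUnion₂.mp hx2
    have hx3 : x ∈ ((s i)⁻¹ * g) • B := by
      rw [← smul_smul]
      exact Set.mem_smul_set_iff_inv_smul_mem.mpr (by simpa using hgx)
    refine mem_iUnion.mpr ⟨e.symm (i, ⟨g, hgF⟩), ?_⟩
    refine mem_iUnion.mpr ⟨?_, ?_⟩
    · simp [e]
    · simp only [Function.comp_apply, Equiv.apply_symm_apply]
      exact ⟨hx, hx3⟩
  · intro j
    simp only [Function.comp_apply]
    calc ((((e j).2 : G))⁻¹ * s (e j).1) • (U ∩ (((s (e j).1)⁻¹ * ((e j).2 : G)) • B))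
        ⊆ (((e j).2 : G)⁻¹ * s (e j).1) • (((s (e j).1)⁻¹ * ((e j).2 : G)) • B) :=
          smul_set_mono inter_subset_right
      _ = B := by
          rw [smul_smul]
          rw [show ((((e j).2 : G))⁻¹ * s (e j).1) * ((s (e j).1)⁻¹ * ((e j).2 : G)) = 1
            by group]
          exact one_smul _ _
  · intro j l hjl _
    have memL : ∀ p : ι, ((p.2 : G)⁻¹ * s p.1) ∈ L := by
      intro p
      refine Finset.mem_image.mpr ⟨(p.2, p.1), ?_, rfl⟩
      exact Finset.mem_product.mpr ⟨p.2.2, Finset.mem_univ _⟩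
    have hne : (((e j).2 : G)⁻¹ * s (e j).1) ≠ (((e l).2 : G)⁻¹ * s (e l).1) := by
      intro heq
      rcases eq_or_ne (e j).1 (e l).1 with h1 | h1
      · apply hjl
        have h2 : ((e j).2 : G) = ((e l).2 : G) := by
          rw [h1] at heq
          exact inv_injective (mul_right_cancel heq)
        have : (e j) = (e l) := Prod.ext h1 (Subtype.ext h2)
        exact e.injective this
      · exfalso
        apply hs (e j).1 (e l).1 h1
        refine Finset.mem_image.mpr ⟨(((e j).2 : G), ((e l).2 : G)), ?_, ?_⟩
        · exact Finset.mem_product.mpr ⟨(e j).2.2, (e l).2.2⟩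
        · have : s (e j).1 = ((e j).2 : G) * (((e l).2 : G)⁻¹ * s (e l).1) := by
            rw [← heq]; group
          rw [this]; group
    have hdisj := hUfree _ (memL (e j)) _ (memL (e l)) hne
    exact hdisj.mono (smul_set_mono inter_subset_left) (smul_set_mono inter_subset_left)
end

section
/- Let G be a countable group and let F ⊂ F′ be finite symmetric subsets of G containing the identity. Then there exists a local function Φ : C_{F′} → {1,…,3^{|F|}}^G such that Φ_x ∈ C_F for every x ∈ C_{F′}. -/
open Set Pointwise

/-- The space `C_F` of proper colorings of the Cayley graph `Cay(G, F)` with `3 ^ |F|`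
colors. -/
def Colorings (G : Type*) [Group G] (F : Finset G) : Set (G → Fin (3 ^ F.card)) :=
  {x | ∀ g ∈ F, g ≠ 1 → ∀ h : G, x h ≠ x (g * h)}

/-- `Φ` is a local map on the (right-invariant) input set `𝓕 ⊆ Q^G`: the value `Φ x g` is
determined by the pattern of `x` in the window `W` around `g`. -/
def IsLocalMap {G Q R : Type*} [Group G] (𝓕 : Set (G → Q)) (Φ : (G → Q) → (G → R)) : Prop :=
  ∃ (W : Finset G) (φ : (W → Q) → R),
    ∀ x ∈ 𝓕, ∀ g : G, Φ x g = φ fun h => x (↑h * g)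

/-- `S : G → 2^D ⊔ {⋆}` is an exact tiling of `G`: the tiles `S(g)g` are pairwise disjoint
and cover `G`. -/
def IsExactTiling {G : Type*} [Group G] (D : Finset G) (S : G → Option (Finset G)) : Prop :=
  (∀ g T, S g = some T → T ⊆ D) ∧
  (∀ g g' : G, g ≠ g' → ∀ T T', S g = some T → S g' = some T' →
    Disjoint ((· * g) '' (T : Set G)) ((· * g') '' (T' : Set G))) ∧
  (∀ a : G, ∃ g T, S g = some T ∧ a ∈ (· * g) '' (T : Set G))

/-- All shapes of the tiling `S` are `(K, ε)`-invariant. -/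
def TilingInv {G : Type*} [Group G] (K : Finset G) (ε : ℝ) (S : G → Option (Finset G)) :
    Prop :=
  ∀ g T, S g = some T → FolnerInv K ε T

/-- `G` has a local tiling algorithm: for every finite `K ⊆ G` and `ε > 0` there are finite
symmetric `F, D ⊆ G` and a local function on `C_F` producing `(K, ε)`-invariant exact
tilings of `G` with shapes contained in `D`. -/
def HasLocalTilingAlgorithm (G : Type*) [Group G] : Prop :=
  ∀ (K : Finset G) (ε : ℝ), 0 < ε →
    ∃ (F D : Finset G) (Φ : (G → Fin (3 ^ F.card)) → (G → Option (Finset G))),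
      (1 : G) ∈ F ∧ (∀ g ∈ F, g⁻¹ ∈ F) ∧ (∀ g ∈ D, g⁻¹ ∈ D) ∧
      IsLocalMap (Colorings G F) Φ ∧
      ∀ x ∈ Colorings G F, IsExactTiling D (Φ x) ∧ TilingInv K ε (Φ x)

/-! Recolour greedily in the order of the old colours: a vertex takes the least colour not already
taken by its `F`-neighbours of smaller old colour. At most `|F|` colours are ever forbidden, so the
new colours lie below `|F| + 1 ≤ 3 ^ |F|`, and neighbours with different old colours get different
new ones. Since the old colours are below `N`, the recursion has depth at most `N`, so the new
colour at `g` only depends on the old colouring on `F ^ N * {g}`. -/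

lemma Nat.sInf_compl_finset_le_card (s : Finset ℕ) : sInf (↑s : Set ℕ)ᶜ ≤ s.card := by
  obtain ⟨c, hc, hcs⟩ := Finset.exists_mem_notMem_of_card_lt_card
    (show s.card < (Finset.range (s.card + 1)).card by simp)
  exact (Nat.sInf_le hcs).trans (Nat.lt_succ_iff.mp (Finset.mem_range.mp hc))

lemma isLocalMap_of_forall_eq_of_eqOn {G Q R : Type*} [Group G] [Nonempty Q]
    (𝓕 : Set (G → Q)) (Φ : (G → Q) → (G → R)) (W : Finset G)
    (hΦ : ∀ x g, Φ x g = Φ (fun a => x (a * g)) 1)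
    (hW : ∀ x y, (∀ a ∈ W, x a = y a) → Φ x 1 = Φ y 1) : IsLocalMap 𝓕 Φ := by
  classical
  refine ⟨W, fun p => Φ (fun a => if ha : a ∈ W then p ⟨a, ha⟩ else Classical.arbitrary Q) 1,
    fun x _ g => ?_⟩
  rw [hΦ]
  exact hW _ _ fun a ha => by simp [ha]

section GreedyRecoloring

variable {G : Type*} [Group G] (F : Finset G)

def takenColors (x c : G → ℕ) (g : G) : Finset ℕ :=
  (F.filter fun h => x (h * g) < x g).image fun h => c (h * g)

lemma card_takenColors_le (x c : G → ℕ) (g : G) : (takenColors F x c g).card ≤ F.card :=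
  Finset.card_image_le.trans (Finset.card_filter_le _ _)

/-- Stage `k` of the greedy recolouring; it is final at every `g` with `x g < k`. -/
noncomputable def greedyStage (x : G → ℕ) : ℕ → G → ℕ
  | 0, _ => 0
  | k + 1, g => sInf (↑(takenColors F x (greedyStage x k) g) : Set ℕ)ᶜ

variable {F}

lemma greedyStage_succ_notMem (x : G → ℕ) (k : ℕ) (g : G) :
    greedyStage F x (k + 1) g ∉ takenColors F x (greedyStage F x k) g :=
  Nat.sInf_mem (s := (↑(takenColors F x (greedyStage F x k) g) : Set ℕ)ᶜ)
    (takenColors F x (greedyStage F x k) g).finite_toSet.infinite_compl.nonempty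

lemma greedyStage_le_card (x : G → ℕ) : ∀ k g, greedyStage F x k g ≤ F.card
  | 0, _ => Nat.zero_le _
  | _ + 1, g => (Nat.sInf_compl_finset_le_card _).trans (card_takenColors_le F x _ g)

lemma greedyStage_eq_of_lt (x : G → ℕ) {k m : ℕ} {g : G} (hk : x g < k) (hm : x g < m) :
    greedyStage F x k g = greedyStage F x m g := by
  induction k generalizing m g with
  | zero => omega
  | succ k ih =>
    obtain ⟨m, rfl⟩ := Nat.exists_eq_add_one_of_ne_zero (Nat.ne_zero_of_lt hm)
    simp only [greedyStage]
    congr 3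
    refine Finset.image_congr fun h hh => ?_
    have hlt := (Finset.mem_filter.mp hh).2
    exact ih (by omega) (by omega)

lemma greedyStage_ne_of_lt (x : G → ℕ) {k : ℕ} {g h : G} (hh : h ∈ F)
    (hlt : x (h * g) < x g) (hk : x g < k) :
    greedyStage F x k (h * g) ≠ greedyStage F x k g := by
  obtain ⟨k, rfl⟩ := Nat.exists_eq_add_one_of_ne_zero (Nat.ne_zero_of_lt hk)
  intro heq
  apply greedyStage_succ_notMem x k g
  rw [← heq, greedyStage_eq_of_lt x (m := k) (by omega) (by omega)]
  exact Finset.mem_image_of_mem _ (Finset.mem_filter.mpr ⟨hh, hlt⟩)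

lemma greedyStage_ne_of_ne (x : G → ℕ) (hF : ∀ h ∈ F, h⁻¹ ∈ F) {k : ℕ} {g h : G} (hh : h ∈ F)
    (hne : x (h * g) ≠ x g) (hg : x g < k) (hhg : x (h * g) < k) :
    greedyStage F x k (h * g) ≠ greedyStage F x k g := by
  rcases hne.lt_or_gt with hlt | hlt
  · exact greedyStage_ne_of_lt x hh hlt hg
  · have := greedyStage_ne_of_lt x (hF h hh) (g := h * g) (by rwa [inv_mul_cancel_left]) hhg
    rw [inv_mul_cancel_left] at this
    exact this.symm

lemma greedyStage_comp_mul_right (x : G → ℕ) (g : G) :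
    ∀ k t, greedyStage F (fun a => x (a * g)) k t = greedyStage F x k (t * g)
  | 0, _ => rfl
  | k + 1, t => by
    simp only [greedyStage, takenColors, mul_assoc, greedyStage_comp_mul_right x g k]

lemma greedyStage_congr_of_eqOn_pow [DecidableEq G] (hF : (1 : G) ∈ F) {x y : G → ℕ} :
    ∀ k t, (∀ a ∈ F ^ k, x (a * t) = y (a * t)) → greedyStage F x k t = greedyStage F y k t
  | 0, _, _ => rfl
  | k + 1, t, hxy => by
    have hmem : ∀ {a h}, a ∈ F ^ k → h ∈ F → a * h ∈ F ^ (k + 1) := fun ha hh => by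
      rw [pow_succ]; exact Finset.mul_mem_mul ha hh
    have ht : x t = y t := by simpa using hxy 1 (Finset.one_mem_pow hF)
    have hht : ∀ h ∈ F, x (h * t) = y (h * t) := fun h hh => by
      simpa using hxy (1 * h) (hmem (Finset.one_mem_pow hF) hh)
    simp only [greedyStage, takenColors]
    rw [Finset.filter_congr fun h hh => by rw [ht, hht h hh]]
    congr 3
    refine Finset.image_congr fun h hh => greedyStage_congr_of_eqOn_pow hF k (h * t) ?_
    intro a ha
    simpa [mul_assoc] using hxy (a * h) (hmem ha (Finset.mem_filter.mp hh).1)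

variable (F)

noncomputable def greedyRecoloring (N : ℕ) (x : G → Fin N) (g : G) : Fin (3 ^ F.card) :=
  ⟨greedyStage F (fun a => x a) N g,
    (greedyStage_le_card _ N g).trans_lt (Nat.lt_pow_self (by norm_num))⟩

lemma isLocalMap_greedyRecoloring [DecidableEq G] (hF : (1 : G) ∈ F) {N : ℕ} [NeZero N]
    (𝓕 : Set (G → Fin N)) : IsLocalMap 𝓕 (greedyRecoloring F N) :=
  isLocalMap_of_forall_eq_of_eqOn 𝓕 _ (F ^ N)
    (fun x g => Fin.ext <| by
      simp only [greedyRecoloring]; rw [greedyStage_comp_mul_right (fun a => (x a : ℕ)), one_mul])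
    (fun x y hxy => Fin.ext (greedyStage_congr_of_eqOn_pow hF N 1 fun a ha => by simp [hxy a ha]))

lemma greedyRecoloring_mem_colorings (hF : ∀ h ∈ F, h⁻¹ ∈ F) {N : ℕ} {x : G → Fin N}
    (hx : ∀ h ∈ F, h ≠ 1 → ∀ g, x g ≠ x (h * g)) : greedyRecoloring F N x ∈ Colorings G F :=
  fun h hh h1 g heq => greedyStage_ne_of_ne _ hF hh (fun hval => hx h hh h1 g (Fin.ext hval.symm))
    (x g).isLt (x (h * g)).isLt (congrArg Fin.val heq).symm

end GreedyRecoloring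

theorem local_coloring_reduction_general {G : Type*} [Group G]
    (F F' : Finset G) (hFF' : F ⊆ F')
    (hF1 : (1 : G) ∈ F) (hFsymm : ∀ g ∈ F, g⁻¹ ∈ F) :
    ∃ Φ : (G → Fin (3 ^ F'.card)) → (G → Fin (3 ^ F.card)),
      IsLocalMap (Colorings G F') Φ ∧ ∀ x ∈ Colorings G F', Φ x ∈ Colorings G F := by
  classical
  exact ⟨greedyRecoloring F _, isLocalMap_greedyRecoloring F hF1 _,
    fun x hx => greedyRecoloring_mem_colorings F hFsymm fun h hh => hx h (hFF' hh)⟩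

/-- If `F ⊆ F'` are finite symmetric subsets of a countable group
containing the identity, then there is a local function from `C_{F'}` to `C_F`. -/
theorem local_coloring_reduction {G : Type*} [Group G] [Countable G] [Infinite G]
    (F F' : Finset G) (hFF' : F ⊆ F')
    (hF1 : (1 : G) ∈ F) (hFsymm : ∀ g ∈ F, g⁻¹ ∈ F)
    (hF'1 : (1 : G) ∈ F') (hF'symm : ∀ g ∈ F', g⁻¹ ∈ F') :
    ∃ Φ : (G → Fin (3 ^ F'.card)) → (G → Fin (3 ^ F.card)),
      IsLocalMap (Colorings G F') Φ ∧ ∀ x ∈ Colorings G F', Φ x ∈ Colorings G F :=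
  local_coloring_reduction_general F F' hFF' hF1 hFsymm
end

section
/- If a free action G ↷ X of a countably infinite amenable group on a compact metrizable space has the Uniform Rokhlin Property (URP), then it has the marker property. -/
open Set MeasureTheory Pointwise Topology

/-- If a free action of a countably infinite amenable group on a compact
metrizable space has the Uniform Rokhlin Property, then it has the marker property. -/
theorem urp_implies_markerProperty {G X : Type*} [Group G] [Countable G] [Infinite G]
    [TopologicalSpace X] [CompactSpace X] [TopologicalSpace.MetrizableSpace X]
    [MulAction G X] [ContinuousConstSMul G X]
    (hamen : IsAmenableGroup G)
    (hfree : ∀ (g : G) (x : X), g • x = x → g = 1)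
    (hURP : URP G X) :
    MarkerProperty G X := by
  intro L
  classical
  obtain ⟨n, S, V, ⟨hVopen, hFreeTower, hDisj⟩, hInv, hBD⟩ :=
    hURP ((insert (1:G) L).image (·⁻¹)) (1/2) (by norm_num)
  -- choose a translate c i in each shape S i such that g * c i ∈ S i for all g ∈ L ∪ {1}
  have hc : ∀ i, ∃ cc : G, ∀ g ∈ insert (1:G) L, g * cc ∈ S i := by
    intro i
    have h := hInv i
    unfold FolnerInv at h
    have hTne : (⋂ g ∈ (insert (1:G) L).image (·⁻¹), g • ((S i : Set G))).Nonempty := by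
      rw [Set.nonempty_iff_ne_empty]
      intro he
      rw [he, Set.ncard_empty] at h
      have h0 : (0:ℝ) ≤ (S i).card := Nat.cast_nonneg _
      norm_num at h
      linarith
    obtain ⟨cc, hcc⟩ := hTne
    refine ⟨cc, fun g hg => ?_⟩
    have hKmem : g⁻¹ ∈ (insert (1:G) L).image (·⁻¹) := Finset.mem_image_of_mem _ hg
    have hmem := Set.mem_iInter₂.mp hcc g⁻¹ hKmem
    rw [Set.mem_smul_set_iff_inv_smul_mem, inv_inv, smul_eq_mul] at hmem
    exact_mod_cast hmem
  choose c hc using hc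
  refine ⟨⋃ i, c i • V i, ⟨isOpen_iUnion fun i => (hVopen i).smul _, ?_⟩, ?_⟩
  · -- marker property: G • U = X
    unfold upperBD at hBD
    haveI : Nonempty {F : Finset G // F.Nonempty} := ⟨⟨{1}, Finset.singleton_nonempty 1⟩⟩
    obtain ⟨F, hF⟩ := exists_lt_of_ciInf_lt hBD
    have hFcard : (0:ℝ) < F.1.card := by exact_mod_cast F.2.card_pos
    ext x
    simp only [Set.mem_univ, iff_true, Set.mem_iUnion]
    set A : Set X := Set.univ \ ⋃ i, Footprint (S i) (V i) with hA
    have hmem : ∃ f ∈ F.1, f • x ∈ ⋃ i, Footprint (S i) (V i) := by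
      by_contra hcon
      push_neg at hcon
      have himg : ((· • x) '' (F.1 : Set G)) ⊆ A := by
        rintro _ ⟨f, hf, rfl⟩
        exact ⟨trivial, hcon f hf⟩
      have hinj : Function.Injective (· • x : G → X) := by
        intro a b hab
        have hab' : a • x = b • x := hab
        have hx : (b⁻¹ * a) • x = x := by
          rw [mul_smul, hab', inv_smul_smul]
        have := hfree _ _ hx
        rw [inv_mul_eq_one] at this
        exact this.symm
      have hAx : (A ∩ ((· • x) '' (F.1 : Set G))) = (· • x) '' (F.1 : Set G) :=
        Set.inter_eq_self_of_subset_right himg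
      have hcardimg : ((· • x) '' (F.1 : Set G)).ncard = F.1.card := by
        rw [Set.ncard_image_of_injective _ hinj, Set.ncard_coe_finset]
      have hbdd : BddAbove (Set.range fun y : X =>
          ((A ∩ ((· • y) '' (F.1 : Set G))).ncard : ℝ) / (F.1.card : ℝ)) := by
        refine ⟨1, ?_⟩
        rintro _ ⟨y, rfl⟩
        have h1 : (A ∩ ((· • y) '' (F.1 : Set G))).ncard ≤ F.1.card := by
          calc (A ∩ ((· • y) '' (F.1 : Set G))).ncard
              ≤ ((· • y) '' (F.1 : Set G)).ncard :=
                Set.ncard_le_ncard Set.inter_subset_right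
                  ((F.1.finite_toSet).image _)
            _ ≤ (F.1 : Set G).ncard := Set.ncard_image_le F.1.finite_toSet
            _ = F.1.card := Set.ncard_coe_finset _
        rw [div_le_one hFcard]
        exact_mod_cast h1
      have hle := le_ciSup hbdd x
      rw [hAx, hcardimg, div_self (ne_of_gt hFcard)] at hle
      have := lt_of_le_of_lt hle hF
      norm_num at this
    obtain ⟨f, hfF, hfW⟩ := hmem
    rw [Set.mem_iUnion] at hfW
    obtain ⟨i, hfW⟩ := hfW
    unfold Footprint at hfW
    rw [Set.mem_iUnion₂] at hfW
    obtain ⟨g, hgS, hgV⟩ := hfW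
    refine ⟨(c i * (g⁻¹ * f))⁻¹, ?_⟩
    rw [Set.mem_inv_smul_set_iff]
    refine Set.mem_iUnion.mpr ⟨i, ?_⟩
    have hv : (g⁻¹ * f) • x ∈ V i := by
      rw [mul_smul]
      exact Set.mem_smul_set_iff_inv_smul_mem.mp hgV
    rw [mul_smul]
    exact Set.smul_mem_smul_set hv
  · -- L-freeness
    intro g hg h hh hne
    rw [Set.smul_set_iUnion, Set.smul_set_iUnion]
    rw [Set.disjoint_iUnion_left]
    intro i
    rw [Set.disjoint_iUnion_right]
    intro j
    rw [smul_smul, smul_smul]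
    by_cases hij : i = j
    · subst hij
      exact hFreeTower i _ (hc i g (Finset.mem_insert_of_mem hg)) _
        (hc i h (Finset.mem_insert_of_mem hh))
        (fun e => hne (mul_right_cancel e))
    · have h1 : (g * c i) • V i ⊆ Footprint (S i) (V i) := by
        intro y hy
        unfold Footprint
        exact Set.mem_biUnion (hc i g (Finset.mem_insert_of_mem hg)) hy
      have h2 : (h * c j) • V j ⊆ Footprint (S j) (V j) := by
        intro y hy
        unfold Footprint
        exact Set.mem_biUnion (hc j h (Finset.mem_insert_of_mem hh)) hy
      exact (hDisj hij).mono h1 h2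
end
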